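/- arXiv:1601.03471 — 10 statements merged into one kernel-verified Lean document; each statement's English description precedes it below -/
import Mathlib

section
/- Any total perfect code in a finite simple graph contains an even number of vertices. -/
open Pointwise

/-- A total perfect code in a graph: every vertex has exactly one neighbour in `C`. -/
def IsTotalPerfectCode {V : Type*} (G : SimpleGraph V) (C : Set V) : Prop :=
  ∀ v : V, ∃! c : V, c ∈ C ∧ G.Adj v c

theorem stmt1 {V : Type*} [Fintype V] (Γ : SimpleGraph V) (C : Set V)
    (h : IsTotalPerfectCode Γ C) : Even C.ncard := by
  classical
  let M : Γ.Subgraph :=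
    { verts := C
      Adj := fun u v => u ∈ C ∧ v ∈ C ∧ Γ.Adj u v
      adj_sub := fun hadj => hadj.2.2
      edge_vert := fun hadj => hadj.1
      symm := ⟨fun u v hadj => ⟨hadj.2.1, hadj.1, hadj.2.2.symm⟩⟩ }
  have hM : M.IsMatching := by
    intro v hv
    obtain ⟨c, ⟨hcC, hcadj⟩, huniq⟩ := h v
    refine ⟨c, ⟨hv, hcC, hcadj⟩, fun w hw => huniq w ⟨hw.2.1, hw.2.2⟩⟩
  have := hM.even_card
  rwa [Set.ncard_eq_toFinset_card'] at *
end

section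
/- If Γ is a d-regular graph admitting a total perfect code, then |V(Γ)|/d is even. Consequently, a regular graph with an odd number of vertices admits no total perfect code. -/
open Pointwise

private lemma tpc_card_even {V : Type*} [Fintype V] (Γ : SimpleGraph V)
    (C : Set V) (hC : IsTotalPerfectCode Γ C) [Fintype C] :
    Even C.toFinset.card := by
  classical
  let M : Γ.Subgraph :=
    { verts := C
      Adj := fun v w => v ∈ C ∧ w ∈ C ∧ Γ.Adj v w
      adj_sub := fun h => h.2.2
      edge_vert := fun h => h.1
      symm := ⟨fun v w h => ⟨h.2.1, h.1, h.2.2.symm⟩⟩ }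
  have hM : M.IsMatching := by
    intro v hv
    obtain ⟨w, ⟨hwC, hadj⟩, huniq⟩ := hC v
    exact ⟨w, ⟨hv, hwC, hadj⟩, fun y hy => huniq y ⟨hy.2.1, hy.2.2⟩⟩
  have := SimpleGraph.Subgraph.IsMatching.even_card (M := M) hM
  simpa [M] using this

private lemma tpc_card_eq {V : Type*} [Fintype V] (Γ : SimpleGraph V) [DecidableRel Γ.Adj]
    (d : ℕ) (hreg : Γ.IsRegularOfDegree d)
    (C : Set V) (hC : IsTotalPerfectCode Γ C) [Fintype C] :
    Fintype.card V = d * C.toFinset.card := by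
  classical
  have h1 : ∀ v : V, (C.toFinset.filter (fun c => Γ.Adj v c)).card = 1 := by
    intro v
    obtain ⟨w, ⟨hwC, hadj⟩, huniq⟩ := hC v
    rw [Finset.card_eq_one]
    exact ⟨w, Finset.eq_singleton_iff_unique_mem.2
      ⟨by simp [hwC, hadj], fun y hy => by
        simp only [Finset.mem_filter, Set.mem_toFinset] at hy
        exact huniq y hy⟩⟩
  have key : ∑ v : V, (C.toFinset.filter (fun c => Γ.Adj v c)).card = Fintype.card V := by
    simp [h1]
  rw [← key]
  have : ∀ v : V, (C.toFinset.filter (fun c => Γ.Adj v c)).card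
      = ∑ c ∈ C.toFinset, if Γ.Adj v c then 1 else 0 := by
    intro v; rw [Finset.card_filter]
  simp only [this]
  rw [Finset.sum_comm]
  have h2 : ∀ c ∈ C.toFinset, (∑ v : V, if Γ.Adj v c then 1 else 0) = d := by
    intro c _
    have : (∑ v : V, if Γ.Adj v c then 1 else 0) = (Finset.univ.filter (fun v => Γ.Adj v c)).card := by
      rw [Finset.card_filter]
    rw [this]
    have : Finset.univ.filter (fun v => Γ.Adj v c) = Γ.neighborFinset c := by
      ext v; simp [SimpleGraph.adj_comm]
    rw [this, ← SimpleGraph.degree, hreg c]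
  rw [Finset.sum_congr rfl h2, Finset.sum_const, smul_eq_mul, mul_comm]

theorem stmt3 {V : Type*} [Fintype V] (Γ : SimpleGraph V) [DecidableRel Γ.Adj] (d : ℕ) (hd : 1 ≤ d)
    (hreg : Γ.IsRegularOfDegree d) :
    (∀ C : Set V, IsTotalPerfectCode Γ C → Even (Fintype.card V / d)) ∧
      (Odd (Fintype.card V) → ¬ ∃ C : Set V, IsTotalPerfectCode Γ C) := by
  classical
  constructor
  · intro C hC
    have hcard := tpc_card_eq Γ d hreg C hC
    have heven := tpc_card_even Γ C hC
    rw [hcard, Nat.mul_div_cancel_left _ (by omega : 0 < d)]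
    exact heven
  · rintro hodd ⟨C, hC⟩
    have hcard := tpc_card_eq Γ d hreg C hC
    have heven := tpc_card_even Γ C hC
    have : Even (Fintype.card V) := hcard ▸ heven.mul_left d
    exact (Nat.not_even_iff_odd.mpr hodd) this
end

section
/- Let p : Σ → Γ be a covering projection of finite simple graphs. If C is a total perfect code in Γ, then p⁻¹(C) is a total perfect code in Σ. -/
open Pointwise

theorem stmt4 {V W : Type*} [Fintype V] [Fintype W] (Sg : SimpleGraph V) (Γ : SimpleGraph W)
    (p : V → W) (hsurj : Function.Surjective p)
    (hcov : ∀ u : V, Set.BijOn p (Sg.neighborSet u) (Γ.neighborSet (p u)))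
    (C : Set W) (h : IsTotalPerfectCode Γ C) :
    IsTotalPerfectCode Sg (p ⁻¹' C) := by
  intro v
  obtain ⟨c, ⟨hcC, hadj⟩, huniq⟩ := h (p v)
  obtain ⟨u, hu, hpu⟩ := (hcov v).surjOn hadj
  refine ⟨u, ⟨by simp [Set.mem_preimage, hpu, hcC], hu⟩, ?_⟩
  rintro u' ⟨hu'C, hu'adj⟩
  have hpu' : p u' = c := huniq (p u') ⟨hu'C, (hcov v).mapsTo hu'adj⟩
  exact (hcov v).injOn hu'adj hu (hpu' ▸ hpu.symm)
end

section
/- Let C be a total perfect code in a Cayley graph Cay(G, S) where S is closed under conjugation. Then the right translates {Cg : g ∈ S} form a partition of G. -/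
open Pointwise

/-- The Cayley graph on a group `G` with connection set `S`. -/
def cayley {G : Type*} [Group G] (S : Set G) : SimpleGraph G :=
  SimpleGraph.fromRel (fun x y => x * y⁻¹ ∈ S)

theorem stmt7 {G : Type*} [Group G] [Fintype G] (S : Set G) (h1 : (1 : G) ∉ S)
    (hSinv : S⁻¹ = S) (hconj : ∀ g : G, ∀ s ∈ S, g * s * g⁻¹ ∈ S)
    (C : Set G) (h : IsTotalPerfectCode (cayley S) C) :
    S.PairwiseDisjoint (fun g => (fun x => x * g) '' C) ∧
      (⋃ g ∈ S, (fun x => x * g) '' C) = Set.univ := by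
  have hadj : ∀ {a b : G}, a * b⁻¹ ∈ S → (cayley S).Adj a b := by
    intro a b hs
    refine ⟨?_, Or.inl hs⟩
    intro hab
    subst hab
    simp only [mul_inv_cancel] at hs
    exact h1 hs
  constructor
  · intro g₁ hg₁ g₂ hg₂ hne12
    rw [Function.onFun, Set.disjoint_left]
    rintro v ⟨x, hx, rfl⟩ ⟨y, hy, hxy⟩
    replace hxy : y * g₂ = x * g₁ := hxy
    have ha1 : (cayley S).Adj (x * g₁) x := by
      have : x * g₁ * x⁻¹ ∈ S := hconj x g₁ hg₁
      exact hadj this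
    have ha2 : (cayley S).Adj (x * g₁) y := by
      have : (x * g₁) * y⁻¹ ∈ S := by
        have := hconj y g₂ hg₂
        rw [← hxy]
        simpa [mul_assoc] using this
      exact hadj this
    obtain ⟨c, _, huniq⟩ := h (x * g₁)
    have hxy' : x = y := (huniq x ⟨hx, ha1⟩).trans (huniq y ⟨hy, ha2⟩).symm
    apply hne12
    subst hxy'
    exact (mul_left_cancel hxy).symm
  · ext v
    simp only [Set.mem_iUnion, Set.mem_image, Set.mem_univ, iff_true]
    obtain ⟨c, ⟨hc, hadjvc⟩, _⟩ := h v
    have hvc : v * c⁻¹ ∈ S := by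
      rcases hadjvc.2 with hs | hs
      · exact hs
      · have : (c * v⁻¹)⁻¹ ∈ S⁻¹ := Set.inv_mem_inv.mpr hs
        rw [hSinv] at this
        simpa using this
    refine ⟨c⁻¹ * v, ?_, c, hc, by group⟩
    have := hconj c⁻¹ _ hvc
    simpa [mul_assoc] using this
end

section
/- Let G be a finite group and let C ⊆ G be closed under conjugation. Then C is a total perfect code in Cay(G, S) if and only if |C|·|S| = |G| and C ∩ ((S²\{1})C) = ∅, where S² = {gg' : g, g' ∈ S}. -/
open Pointwise

theorem stmt8 {G : Type*} [Group G] [Fintype G] (S : Set G) (h1 : (1 : G) ∉ S)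
    (hSinv : S⁻¹ = S) (C : Set G) (hC : ∀ g : G, ∀ c ∈ C, g * c * g⁻¹ ∈ C) :
    IsTotalPerfectCode (cayley S) C ↔
      (C.ncard * S.ncard = Nat.card G ∧ C ∩ (((S * S) \ ({1} : Set G)) * C) = ∅) := by
  classical
  have hinv : ∀ x : G, x ∈ S → x⁻¹ ∈ S := by
    intro x hx
    rw [← hSinv]
    simpa using hx
  have hadj : ∀ v c : G, (cayley S).Adj v c ↔ v * c⁻¹ ∈ S := by
    intro v c
    constructor
    · rintro ⟨hne, h | h⟩
      · exact h
      · have h2 := hinv _ h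
        simpa [mul_inv_rev] using h2
    · intro h
      refine ⟨?_, Or.inl h⟩
      rintro rfl
      simp only [mul_inv_cancel] at h
      exact h1 h
  set f : S × C → G := fun p => (p.1 : G) * p.2 with hf
  have hbij_iff : IsTotalPerfectCode (cayley S) C ↔ Function.Bijective f := by
    constructor
    · intro hT
      constructor
      · rintro ⟨⟨s, hs⟩, ⟨c, hc⟩⟩ ⟨⟨s', hs'⟩, ⟨c', hc'⟩⟩ h
        simp only [hf] at h
        obtain ⟨c₀, _, huniq⟩ := hT (s * c)
        have hc1 : c = c₀ := huniq c ⟨hc, (hadj _ _).mpr (by simpa using hs)⟩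
        have hc2 : c' = c₀ := huniq c' ⟨hc', (hadj _ _).mpr (by
          rw [h]; simpa using hs')⟩
        have hcc : c = c' := hc1.trans hc2.symm
        subst hcc
        have hss : s = s' := by
          replace h := mul_right_cancel h
          exact h
        subst hss
        rfl
      · intro v
        obtain ⟨c, ⟨hcC, hcadj⟩, _⟩ := hT v
        rw [hadj] at hcadj
        exact ⟨⟨⟨v * c⁻¹, hcadj⟩, ⟨c, hcC⟩⟩, by simp [hf]⟩
    · intro hb v
      obtain ⟨⟨⟨s, hs⟩, ⟨c, hc⟩⟩, hv⟩ := hb.2 v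
      simp only [hf] at hv
      refine ⟨c, ⟨hc, (hadj _ _).mpr (by rw [← hv]; simpa using hs)⟩, ?_⟩
      rintro c' ⟨hc', hadj'⟩
      rw [hadj] at hadj'
      have := hb.1 (a₁ := (⟨⟨v * c'⁻¹, hadj'⟩, ⟨c', hc'⟩⟩ : S × C))
        (a₂ := (⟨⟨s, hs⟩, ⟨c, hc⟩⟩ : S × C)) (by simp [hf, hv])
      exact congrArg (fun p => (p.2 : G)) this
  have hcard : Nat.card (S × C) = C.ncard * S.ncard := by
    rw [Nat.card_prod, Nat.card_coe_set_eq, Nat.card_coe_set_eq, mul_comm]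
  rw [hbij_iff]
  constructor
  · intro hb
    refine ⟨by rw [← hcard, Nat.card_eq_of_bijective f hb], ?_⟩
    rw [Set.eq_empty_iff_forall_notMem]
    rintro x ⟨hxC, hxM⟩
    obtain ⟨a, ha, c, hc, rfl⟩ := hxM
    obtain ⟨haSS, hane⟩ := ha
    obtain ⟨s, hs, s', hs', rfl⟩ := haSS
    have heq : f ⟨⟨s', hs'⟩, ⟨c, hc⟩⟩ = f ⟨⟨s⁻¹, hinv s hs⟩, ⟨s * s' * c, hxC⟩⟩ := by
      simp [hf, mul_assoc]
    have := hb.1 heq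
    have hcx : c = s * s' * c := congrArg (fun p => (p.2 : G)) this
    apply hane
    simp only [Set.mem_singleton_iff]
    exact mul_right_cancel (b := c) (show s * s' * c = 1 * c by rw [one_mul, ← hcx])
  · rintro ⟨hcardeq, hempty⟩
    have hinj : Function.Injective f := by
      rintro ⟨⟨s, hs⟩, ⟨c, hc⟩⟩ ⟨⟨s', hs'⟩, ⟨c', hc'⟩⟩ h
      simp only [hf] at h
      by_cases hcc : c = c'
      · subst hcc
        have : s = s' := mul_right_cancel h
        subst this; rfl
      · exfalso
        have hc0 : c = (s⁻¹ * s') * c' := by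
          rw [mul_assoc, ← h, ← mul_assoc, inv_mul_cancel, one_mul]
        have hmem : c ∈ ((S * S) \ ({1} : Set G)) * C := by
          refine ⟨s⁻¹ * s', ⟨⟨s⁻¹, hinv s hs, s', hs', rfl⟩, ?_⟩, c', hc', hc0.symm⟩
          simp only [Set.mem_singleton_iff]
          intro h1'
          apply hcc
          rw [hc0, h1', one_mul]
        exact Set.eq_empty_iff_forall_notMem.mp hempty c ⟨hc, hmem⟩
    exact (Nat.bijective_iff_injective_and_card f).mpr
      ⟨hinj, by rw [hcard, hcardeq]⟩
end

section
/- Let N be a normal subgroup of a finite group G. Then N is a total perfect code in Cay(G, S) if and only if the index [G:N] equals |S| and N ∩ S² = {1}, where S² = {gg' : g, g' ∈ S}. -/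
open Pointwise

theorem stmt9 {G : Type*} [Group G] [Fintype G] (S : Set G) (h1 : (1 : G) ∉ S)
    (hSinv : S⁻¹ = S) (N : Subgroup G) [N.Normal] :
    IsTotalPerfectCode (cayley S) (N : Set G) ↔
      (N.index = S.ncard ∧ (N : Set G) ∩ (S * S) = {1}) := by
  have hadj : ∀ x y : G, (cayley S).Adj x y ↔ x * y⁻¹ ∈ S := by
    intro x y
    constructor
    · rintro ⟨hne, h | h⟩
      · exact h
      · rw [← hSinv, Set.mem_inv]
        simpa using h
    · intro h
      exact ⟨fun e => h1 (by simpa [e] using h), Or.inl h⟩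
  set f : S → G ⧸ N := fun s => ((s : G) : G ⧸ N) with hf
  have key : IsTotalPerfectCode (cayley S) (N : Set G) ↔ Function.Bijective f := by
    constructor
    · intro h
      constructor
      · rintro ⟨s, hs⟩ ⟨t, ht⟩ hst
        simp only [hf] at hst
        have hmem : s⁻¹ * t ∈ N := QuotientGroup.eq.mp hst
        obtain ⟨c, hc, huniq⟩ := h t
        have e1 : (1 : G) = c := huniq 1 ⟨N.one_mem, (hadj t 1).mpr (by simpa using ht)⟩
        have e2 : s⁻¹ * t = c := huniq (s⁻¹ * t)
          ⟨hmem, (hadj t (s⁻¹ * t)).mpr (by simpa [mul_assoc] using hs)⟩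
        have : s⁻¹ * t = 1 := by rw [e2, ← e1]
        ext
        exact (inv_mul_eq_one.mp this)
      · intro q
        obtain ⟨v, rfl⟩ := QuotientGroup.mk_surjective q
        obtain ⟨c, ⟨hcN, hcadj⟩, -⟩ := h v
        have hs : v * c⁻¹ ∈ S := (hadj v c).mp hcadj
        refine ⟨⟨v * c⁻¹, hs⟩, ?_⟩
        simp only [hf]
        rw [QuotientGroup.eq]
        simpa [mul_assoc] using hcN
    · rintro ⟨hinj, hsurj⟩ v
      obtain ⟨⟨s, hs⟩, hfs⟩ := hsurj ((v : G) : G ⧸ N)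
      simp only [hf] at hfs
      have hsv : s⁻¹ * v ∈ N := QuotientGroup.eq.mp hfs
      refine ⟨s⁻¹ * v, ⟨hsv, (hadj v (s⁻¹ * v)).mpr (by simpa [mul_assoc] using hs)⟩, ?_⟩
      rintro c ⟨hcN, hcadj⟩
      have hs' : v * c⁻¹ ∈ S := (hadj v c).mp hcadj
      have : (⟨v * c⁻¹, hs'⟩ : S) = ⟨s, hs⟩ := by
        apply hinj
        simp only [hf]
        rw [hfs, QuotientGroup.eq]
        simpa [mul_assoc] using hcN
      have hst : v * c⁻¹ = s := congrArg Subtype.val this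
      rw [← hst]
      group
  rw [key]
  constructor
  · rintro ⟨hinj, hsurj⟩
    constructor
    · have := Nat.card_eq_of_bijective f ⟨hinj, hsurj⟩
      rw [Nat.card_coe_set_eq] at this
      rw [Subgroup.index, ← this]
    · ext x
      simp only [Set.mem_inter_iff, Set.mem_singleton_iff]
      constructor
      · rintro ⟨hxN, hx2⟩
        obtain ⟨a, ha, b, hb, rfl⟩ := hx2
        have hbinv : b⁻¹ ∈ S := by rw [← hSinv]; exact Set.inv_mem_inv.mpr hb
        have hconj : a⁻¹ * b⁻¹ ∈ N := by
          have : a⁻¹ * (a * b)⁻¹ * a ∈ N :=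
            Subgroup.Normal.conj_mem' ‹N.Normal› _ (N.inv_mem hxN) a
          simpa [mul_inv_rev, mul_assoc] using this
        have : (⟨a, ha⟩ : S) = ⟨b⁻¹, hbinv⟩ := by
          apply hinj
          simp only [hf]
          rw [QuotientGroup.eq]
          exact hconj
        have : a = b⁻¹ := congrArg Subtype.val this
        rw [this]
        group
      · rintro rfl
        obtain ⟨⟨s, hs⟩, -⟩ := hsurj ((1 : G) : G ⧸ N)
        have hsinv : s⁻¹ ∈ S := by rw [← hSinv]; exact Set.inv_mem_inv.mpr hs
        exact ⟨N.one_mem, ⟨s, hs, s⁻¹, hsinv, mul_inv_cancel s⟩⟩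
  · rintro ⟨hcard, hinter⟩
    have hinj : Function.Injective f := by
      rintro ⟨a, ha⟩ ⟨b, hb⟩ hab
      simp only [hf] at hab
      have hmem : a⁻¹ * b ∈ N := QuotientGroup.eq.mp hab
      have hainv : a⁻¹ ∈ S := by rw [← hSinv]; exact Set.inv_mem_inv.mpr ha
      have : a⁻¹ * b ∈ (N : Set G) ∩ (S * S) := ⟨hmem, ⟨a⁻¹, hainv, b, hb, rfl⟩⟩
      rw [hinter] at this
      have : a⁻¹ * b = 1 := this
      ext
      exact inv_mul_eq_one.mp this
    rw [Nat.bijective_iff_injective_and_card]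
    refine ⟨hinj, ?_⟩
    rw [Nat.card_coe_set_eq, ← hcard, Subgroup.index]
end

section
/- Let N be a normal subgroup of a finite group G that is a total perfect code in Cay(G, S). Then |N ∩ S| = 1 and the unique element of N ∩ S is an involution. -/
open Pointwise

theorem stmt10 {G : Type*} [Group G] [Fintype G] (S : Set G) (h1 : (1 : G) ∉ S)
    (hSinv : S⁻¹ = S) (N : Subgroup G) [N.Normal]
    (h : IsTotalPerfectCode (cayley S) (N : Set G)) :
    ∃ g : G, (N : Set G) ∩ S = {g} ∧ orderOf g = 2 := by
  have hmemS : ∀ x : G, x⁻¹ ∈ S ↔ x ∈ S := by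
    intro x
    constructor
    · intro hx
      have : x⁻¹ ∈ S⁻¹ := by rw [hSinv]; exact hx
      simpa using this
    · intro hx
      have : x ∈ S⁻¹ := by rw [hSinv]; exact hx
      simpa using this
  have hadj : ∀ x : G, x ∈ S ↔ (cayley S).Adj 1 x := by
    intro x
    constructor
    · intro hx
      refine ⟨?_, ?_⟩
      · rintro rfl; exact h1 hx
      · right; simpa using hx
    · rintro ⟨hne, hor⟩
      rcases hor with hl | hr
      · rw [← hmemS x]; simpa using hl
      · simpa using hr
  obtain ⟨c, ⟨hcN, hcadj⟩, huniq⟩ := h 1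
  have hcS : c ∈ S := (hadj c).mpr hcadj
  have hset : (N : Set G) ∩ S = {c} := by
    ext g
    constructor
    · rintro ⟨hgN, hgS⟩
      exact huniq g ⟨hgN, (hadj g).mp hgS⟩
    · rintro rfl
      exact ⟨hcN, hcS⟩
  have hcinv : c⁻¹ ∈ (N : Set G) ∩ S := ⟨N.inv_mem hcN, (hmemS c).mpr hcS⟩
  rw [hset] at hcinv
  have hc2 : c ^ 2 = 1 := by
    have : c⁻¹ = c := hcinv
    calc c ^ 2 = c * c := sq c
    _ = c * c⁻¹ := by rw [this]
    _ = 1 := mul_inv_cancel c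
  refine ⟨c, hset, orderOf_eq_prime hc2 ?_⟩
  rintro rfl
  exact h1 hcS
end

section
/- Let G be a finite abelian group and C a subgroup of G. Then C is a total perfect code in Cay(G, S) if and only if |C|·|S| = |G| and C ∩ (S+S) = {0}. -/
open Pointwise

/-- The Cayley graph on an additive group `G` with connection set `S`. -/
def addCayley {G : Type*} [AddGroup G] (S : Set G) : SimpleGraph G :=
  SimpleGraph.fromRel (fun x y => x - y ∈ S)

theorem stmt11 {G : Type*} [AddCommGroup G] [Fintype G] (S : Set G) (h0 : (0 : G) ∉ S)
    (hSneg : -S = S) (C : AddSubgroup G) :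
    IsTotalPerfectCode (addCayley S) (C : Set G) ↔
      (Nat.card C * S.ncard = Nat.card G ∧ (C : Set G) ∩ (S + S) = {0}) := by
  classical
  have hneg : ∀ a : G, -a ∈ S ↔ a ∈ S := by
    intro a
    have h := Set.ext_iff.mp hSneg (-a)
    rw [← h, Set.mem_neg, neg_neg]
  have hadj : ∀ x y : G, (addCayley S).Adj x y ↔ x - y ∈ S := by
    intro x y
    simp only [addCayley, SimpleGraph.fromRel_adj]
    constructor
    · rintro ⟨_, h | h⟩
      · exact h
      · rw [← hneg, neg_sub]; exact h
    · intro h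
      exact ⟨fun he => h0 (by rw [he, sub_self] at h; exact h), Or.inl h⟩
  set φ : C × S → G := fun p => (p.1 : G) + (p.2 : G) with hφdef
  have hScard : Nat.card S = S.ncard := Nat.card_coe_set_eq S
  have hcardprod : Nat.card (C × S) = Nat.card C * S.ncard := by
    rw [Nat.card_prod, hScard]
  have hinj : (C : Set G) ∩ (S + S) ⊆ {0} → Function.Injective φ := by
    intro hint
    rintro ⟨⟨c, hc⟩, ⟨s, hs⟩⟩ ⟨⟨c', hc'⟩, ⟨s', hs'⟩⟩ h
    simp only [hφdef] at h
    have hsub : c - c' = s' - s := by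
      rw [sub_eq_sub_iff_add_eq_add, h, add_comm]
    have hmem : c - c' ∈ (C : Set G) ∩ (S + S) := by
      refine ⟨sub_mem hc hc', ?_⟩
      rw [hsub, sub_eq_add_neg]
      exact Set.add_mem_add hs' ((hneg s).mpr hs)
    have hcc : c = c' := by
      have := hint hmem
      simpa [sub_eq_zero] using this
    subst hcc
    have hss : s = s' := by
      have := add_left_cancel h
      exact this
    simp [hss]
  simp only [IsTotalPerfectCode, hadj]
  constructor
  · intro h
    -- S is nonempty
    obtain ⟨c0, ⟨hc0, hc0S⟩, -⟩ := h 0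
    have hSne : S.Nonempty := ⟨0 - c0, hc0S⟩
    -- the intersection condition
    have hint : (C : Set G) ∩ (S + S) = {0} := by
      ext x
      constructor
      · rintro ⟨hxC, hxSS⟩
        obtain ⟨s, hs, s', hs', rfl⟩ := Set.mem_add.mp hxSS
        have h1 : (s + s' : G) ∈ (C : Set G) ∧ s - (s + s') ∈ S := by
          refine ⟨hxC, ?_⟩
          have : s - (s + s') = -s' := by abel
          rw [this]
          exact (hneg s').mpr hs'
        have h2 : (0 : G) ∈ (C : Set G) ∧ s - 0 ∈ S :=
          ⟨C.zero_mem, by simpa using hs⟩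
        exact (h s).unique h1 h2
      · rintro rfl
        obtain ⟨s, hs⟩ := hSne
        refine ⟨C.zero_mem, ?_⟩
        have : s + (-s) ∈ S + S := Set.add_mem_add hs ((hneg s).mpr hs)
        simpa using this
    refine ⟨?_, hint⟩
    have hsurj : Function.Surjective φ := by
      intro v
      obtain ⟨c, ⟨hc, hcS⟩, -⟩ := h v
      exact ⟨⟨⟨c, hc⟩, ⟨v - c, hcS⟩⟩, by simp [hφdef]⟩
    have hbij : Function.Bijective φ := ⟨hinj hint.subset, hsurj⟩
    rw [← hcardprod]
    exact Nat.card_eq_of_bijective φ hbij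
  · rintro ⟨hcard, hint⟩
    have hbij : Function.Bijective φ := by
      rw [Nat.bijective_iff_injective_and_card]
      exact ⟨hinj hint.subset, by rw [hcardprod, hcard]⟩
    intro v
    obtain ⟨⟨⟨c, hc⟩, ⟨s, hs⟩⟩, hφv⟩ := hbij.surjective v
    simp only [hφdef] at hφv
    refine ⟨c, ⟨hc, ?_⟩, ?_⟩
    · rw [← hφv]; simpa using hs
    · rintro c' ⟨hc', hc'S⟩
      have hmem : c' - c ∈ (C : Set G) ∩ (S + S) := by
        refine ⟨sub_mem hc' hc, ?_⟩
        have heq : c' - c = (v - c) + -(v - c') := by abel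
        rw [heq]
        have hvc : v - c ∈ S := by rw [← hφv]; simpa using hs
        exact Set.add_mem_add hvc ((hneg _).mpr hc'S)
      have := hint ▸ hmem
      have h0' : c' - c = 0 := this
      rw [sub_eq_zero] at h0'
      exact h0'
end

section
/- Let G be a finite abelian group and C ⊆ G. If |C|·|S| = |G| and (C − C) ∩ (S+S) = {0}, then C is a total perfect code in Cay(G, S). -/
open Pointwise

theorem stmt12 {G : Type*} [AddCommGroup G] [Fintype G] (S : Set G) (h0 : (0 : G) ∉ S)
    (hSneg : -S = S) (C : Set G) (hcard : C.ncard * S.ncard = Nat.card G)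
    (hdiff : (C - C) ∩ (S + S) = {0}) :
    IsTotalPerfectCode (addCayley S) C := by
  have hneg : ∀ x : G, x ∈ S → -x ∈ S := by
    intro x hx
    rw [← hSneg]
    simpa using hx
  -- adjacency characterization
  have hadj : ∀ x y : G, (addCayley S).Adj x y ↔ x - y ∈ S := by
    intro x y
    constructor
    · rintro ⟨hne, h | h⟩
      · exact h
      · simpa using hneg _ h
    · intro h
      refine ⟨?_, Or.inl h⟩
      rintro rfl
      simp at h
      exact h0 h
  -- key uniqueness fact
  have key : ∀ c c' s s' : G, c ∈ C → c' ∈ C → s ∈ S → s' ∈ S →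
      c + s = c' + s' → c = c' := by
    intro c c' s s' hc hc' hs hs' he
    have hmem : c - c' ∈ (C - C) ∩ (S + S) := by
      constructor
      · exact Set.sub_mem_sub hc hc'
      · have h2 : c - c' = s' - s := sub_eq_sub_iff_add_eq_add.mpr (he.trans (add_comm c' s'))
        rw [h2, sub_eq_add_neg]
        exact Set.add_mem_add hs' (hneg _ hs)
    rw [hdiff] at hmem
    have : c - c' = 0 := hmem
    linear_combination (norm := abel) this
  -- the addition map C × S → G is injective
  have hinj : Function.Injective (fun p : C × S => (p.1 : G) + p.2) := by
    rintro ⟨⟨c, hc⟩, ⟨s, hs⟩⟩ ⟨⟨c', hc'⟩, ⟨s', hs'⟩⟩ he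
    simp only at he
    have hcc : c = c' := key c c' s s' hc hc' hs hs' he
    subst hcc
    have hss : s = s' := by
      have := he
      exact add_left_cancel this
    subst hss
    rfl
  -- finiteness
  have hCfin : C.Finite := Set.toFinite C
  have hSfin : S.Finite := Set.toFinite S
  have hcards : Nat.card (C × S) = Nat.card G := by
    rw [Nat.card_prod]
    rw [Nat.card_coe_set_eq, Nat.card_coe_set_eq]
    exact hcard
  have hbij : Function.Bijective (fun p : C × S => (p.1 : G) + p.2) :=
    (Nat.bijective_iff_injective_and_card _).2 ⟨hinj, hcards⟩
  intro v
  obtain ⟨⟨⟨c, hc⟩, ⟨s, hs⟩⟩, hcs⟩ := hbij.2 v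
  simp only at hcs
  refine ⟨c, ⟨hc, (hadj v c).2 ?_⟩, ?_⟩
  · rw [← hcs]; simpa using hs
  · rintro c' ⟨hc', hadj'⟩
    have hs' : v - c' ∈ S := (hadj v c').1 hadj'
    have : c' + (v - c') = c + s := by rw [← hcs]; abel
    exact key c' c (v - c') s hc' hc hs' hs this
end

section
/- If a connected Cayley graph on the elementary abelian 2-group ℤ₂ⁿ admits a total perfect code, then its degree |S| is a power of 2. -/
open Pointwise

theorem stmt14 (n : ℕ) (S : Set (Fin n → ZMod 2)) (h0 : (0 : Fin n → ZMod 2) ∉ S)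
    (hgen : AddSubgroup.closure S = ⊤) (C : Set (Fin n → ZMod 2))
    (h : IsTotalPerfectCode (addCayley S) C) :
    ∃ t : ℕ, S.ncard = 2 ^ t := by
  classical
  have hsub : ∀ x y : Fin n → ZMod 2, x - y = y - x := by
    intro x y; funext i
    have : ∀ a b : ZMod 2, a - b = b - a := by decide
    exact this (x i) (y i)
  have hadj : ∀ x y : Fin n → ZMod 2, (addCayley S).Adj x y ↔ x - y ∈ S := by
    intro x y
    constructor
    · rintro ⟨hne, h1 | h2⟩
      · exact h1
      · rw [hsub]; exact h2
    · intro hs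
      refine ⟨fun he => h0 ?_, Or.inl hs⟩
      rw [← he, sub_self] at hs; exact absurd hs h0
  choose f hf using h
  let e : (Fin n → ZMod 2) ≃ (C × S) :=
  { toFun := fun v => (⟨f v, (hf v).1.1⟩, ⟨v - f v, (hadj v (f v)).mp (hf v).1.2⟩)
    invFun := fun p => p.1.1 + p.2.1
    left_inv := fun v => by simp only; abel
    right_inv := fun p => by
      obtain ⟨⟨c, hc⟩, ⟨s, hs⟩⟩ := p
      have hkey : f (c + s) = c := by
        symm; apply (hf (c + s)).2
        refine ⟨hc, (hadj _ _).mpr ?_⟩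
        simpa using hs
      simp only [Prod.mk.injEq, Subtype.mk.injEq]
      constructor
      · exact hkey
      · rw [hkey]; abel }
  have hcard : (2 : ℕ) ^ n = C.ncard * S.ncard := by
    have h1 : Nat.card (Fin n → ZMod 2) = Nat.card (C × S) := Nat.card_congr e
    rw [Nat.card_prod, Nat.card_coe_set_eq, Nat.card_coe_set_eq] at h1
    rw [← h1, Nat.card_eq_fintype_card]
    simp [ZMod.card]
  have hdvd : S.ncard ∣ 2 ^ n := ⟨C.ncard, by rw [hcard, mul_comm]⟩
  obtain ⟨t, _, ht⟩ := (Nat.dvd_prime_pow Nat.prime_two).mp hdvd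
  exact ⟨t, ht⟩
end
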